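/- Let H ≥ 2 and let w₁ ∈ ℝ^{k₁}, ..., w_H ∈ ℝ^{k_H} be nonzero vectors, and δ₁, ..., δ_{H-1} ∈ ℝ. Then there are exactly 2^{H-1} tuples (λ₁,...,λ_H) ∈ ℝ^H with λ₁⋯λ_H = 1 and δ_i = ‖λ_{i+1} w_{i+1}‖² − ‖λ_i w_i‖² for all i = 1,...,H−1, and all such tuples agree up to sign changes of the components. -/

import Mathlib

/-!
Index from `0` as in the statement and write `N i = ‖w i‖²`, `σ i = ∑_{j<i} δ j`, `β i = λᵢ² N i`.
The difference equations say `β i = β 0 + σ i`, and `∏ λᵢ = 1` gives `∏ β i = ∏ N i > 0` with every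
`β i > 0`. Since `t ↦ ∏ (t + σ i)` is strictly increasing where all factors are positive and runs
from `0` to `∞`, `β 0` is the unique `t` with all `t + σ i > 0` and `∏ (t + σ i) = ∏ N i`; so every
`λᵢ²` is forced to be `(t + σ i) / N i`. A tuple with these squares is fixed by the signs of
`λ₁, …, λ_{H-1}`, the sign of `λ₀` being dictated by the product, which gives `2^(H-1)` solutions.
-/

open Finset

section PositiveRoot

variable {ι : Type*} [Fintype ι] [Nonempty ι] (σ : ι → ℝ)

theorem strictMonoOn_prod_add :
    StrictMonoOn (fun t => ∏ i, (t + σ i)) {t | ∀ i, 0 < t + σ i} := fun _ ha _ _ hab =>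
  prod_lt_prod_of_nonempty (fun i _ => ha i) (fun i _ => by linarith) univ_nonempty

theorem exists_pos_prod_add_eq {C : ℝ} (hC : 0 < C) :
    ∃ t, (∀ i, 0 < t + σ i) ∧ ∏ i, (t + σ i) = C := by
  obtain ⟨j, hj⟩ := Finite.exists_max fun i => -σ i
  set m := -σ j
  -- at `m` some factor vanishes, at `m + C + 1` every factor is at least `C + 1`
  have hcont : Continuous fun t => ∏ i, (t + σ i) := by fun_prop
  have hlow : ∏ i, (m + σ i) ≤ C := by
    rw [prod_eq_zero (mem_univ j) (neg_add_cancel _)]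
    exact hC.le
  have hhigh : C ≤ ∏ i, (m + C + 1 + σ i) :=
    calc C ≤ (C + 1) ^ Fintype.card ι :=
          (lt_add_one C).le.trans (le_self_pow₀ (by linarith) Fintype.card_ne_zero)
      _ = ∏ _i : ι, (C + 1) := by rw [prod_const, card_univ]
      _ ≤ ∏ i, (m + C + 1 + σ i) :=
          prod_le_prod (fun _ _ => by positivity) fun i _ => by linarith [hj i]
  obtain ⟨t, ⟨hmt, -⟩, ht⟩ :=
    intermediate_value_Icc (by linarith) hcont.continuousOn ⟨hlow, hhigh⟩
  refine ⟨t, fun i => lt_of_le_of_ne (by linarith [hj i]) fun h => ?_, ht⟩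
  exact hC.ne' (ht ▸ prod_eq_zero (mem_univ i) h.symm)

theorem existsUnique_pos_prod_add_eq {C : ℝ} (hC : 0 < C) :
    ∃! t, (∀ i, 0 < t + σ i) ∧ ∏ i, (t + σ i) = C := by
  obtain ⟨t, ht⟩ := exists_pos_prod_add_eq σ hC
  exact ⟨t, ht, fun s hs => (strictMonoOn_prod_add σ).injOn hs.1 ht.1 (hs.2.trans ht.2.symm)⟩

end PositiveRoot

theorem forall_eq_sub_iff_eq_add_sum {M : Type*} [AddCommGroup M] {n : ℕ}
    (f : Fin (n + 1) → M) (δ : ℕ → M) :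
    (∀ i (h : i + 1 < n + 1), δ i = f ⟨i + 1, h⟩ - f ⟨i, by omega⟩) ↔
      ∀ i : Fin (n + 1), f i = f 0 + ∑ j ∈ range i, δ j := by
  constructor
  · rintro h ⟨i, hi⟩
    induction i with
    | zero => simp
    | succ i ih =>
      rw [sum_range_succ, ← add_assoc, ← ih (by omega), h i hi, add_sub_cancel]
  · intro h i hi
    rw [h ⟨i + 1, hi⟩, h ⟨i, by omega⟩]
    simp [sum_range_succ]

theorem ncard_setOf_prod_eq_and_sq_eq {n : ℕ} (b : Fin (n + 1) → ℝ) (hb : ∀ i, 0 < b i)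
    (c : ℝ) (hc : c ^ 2 = ∏ i, b i) :
    {x : Fin (n + 1) → ℝ | ∏ i, x i = c ∧ ∀ i, x i ^ 2 = b i}.ncard = 2 ^ n := by
  classical
  have hsq : ∀ i (y : ℝ), y ^ 2 = b i ↔ y = √(b i) ∨ y = -√(b i) := fun i y => by
    rw [← Real.sq_sqrt (hb i).le, sq_eq_sq_iff_eq_or_eq_neg, Real.sq_sqrt (hb i).le]
  set signs : Finset (Fin n → ℝ) := Fintype.piFinset fun j => {√(b j.succ), -√(b j.succ)}
  have hsigns : ∀ v ∈ signs, ∀ j, v j ^ 2 = b j.succ := fun v hv j => by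
    simpa [hsq, signs] using Fintype.mem_piFinset.mp hv j
  have hprod_ne : ∀ v ∈ signs, ∏ j, v j ≠ 0 := fun v hv =>
    prod_ne_zero_iff.mpr fun j _ h => (hb j.succ).ne' (by rw [← hsigns v hv j, h]; ring)
  have hset : {x : Fin (n + 1) → ℝ | ∏ i, x i = c ∧ ∀ i, x i ^ 2 = b i} =
      (fun v => Fin.cons (c / ∏ j, v j) v) '' signs := by
    ext x
    constructor
    · rintro ⟨hx, hxb⟩
      have htail : Fin.tail x ∈ signs := Fintype.mem_piFinset.mpr fun j => by
        simpa [Fin.tail, hsq] using hxb j.succ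
      refine ⟨Fin.tail x, htail, ?_⟩
      rw [Fin.prod_univ_succ] at hx
      conv_rhs => rw [← Fin.cons_self_tail x]
      dsimp only
      rw [← hx]
      congr 1
      exact mul_div_cancel_right₀ _ (hprod_ne _ htail)
    · rintro ⟨v, hv, rfl⟩
      refine ⟨by rw [Fin.prod_univ_succ]; simp [div_mul_cancel₀ _ (hprod_ne v hv)], ?_⟩
      refine Fin.cases ?_ (fun j => by simpa using hsigns v hv j)
      rw [Fin.prod_univ_succ] at hc
      dsimp only
      rw [Fin.cons_zero, div_pow, hc, ← prod_pow, prod_congr rfl fun j _ => hsigns v hv j,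
        mul_div_cancel_right₀ _ (prod_ne_zero_iff.mpr fun j _ => (hb j.succ).ne')]
  rw [hset, Set.ncard_image_of_injective _ fun v v' h => by simpa using congrArg Fin.tail h,
    Set.ncard_coe_finset, Fintype.card_piFinset]
  simp [card_pair (self_ne_neg.mpr (Real.sqrt_pos.mpr (hb _)).ne')]

theorem setOf_prod_eq_one_and_sq_mul_sub_eq {n : ℕ} (N : Fin (n + 1) → ℝ) (hN : ∀ i, 0 < N i)
    (δ : ℕ → ℝ) {t : ℝ}
    (huniq : ∀ s, (∀ i : Fin (n + 1), 0 < s + ∑ j ∈ range i, δ j) →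
      ∏ i : Fin (n + 1), (s + ∑ j ∈ range i, δ j) = ∏ i, N i → s = t) :
    {lam : Fin (n + 1) → ℝ | ∏ i, lam i = 1 ∧ ∀ i (h : i + 1 < n + 1),
        δ i = lam ⟨i + 1, h⟩ ^ 2 * N ⟨i + 1, h⟩ - lam ⟨i, by omega⟩ ^ 2 * N ⟨i, by omega⟩} =
      {lam | ∏ i, lam i = 1 ∧ ∀ i : Fin (n + 1), lam i ^ 2 = (t + ∑ j ∈ range i, δ j) / N i} := by
  ext lam
  refine and_congr_right fun hlam => ?_
  refine (forall_eq_sub_iff_eq_add_sum (fun i => lam i ^ 2 * N i) δ).trans ?_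
  simp only [eq_div_iff (hN _).ne']
  constructor
  · intro h
    have hlam_ne : ∀ i, lam i ≠ 0 := fun i =>
      prod_ne_zero_iff.mp (hlam ▸ one_ne_zero) i (mem_univ i)
    have hpos : ∀ i : Fin (n + 1), 0 < lam 0 ^ 2 * N 0 + ∑ j ∈ range i, δ j := fun i => by
      rw [← h i]
      exact mul_pos (pow_two_pos_of_ne_zero (hlam_ne i)) (hN i)
    have hprod : ∏ i : Fin (n + 1), (lam 0 ^ 2 * N 0 + ∑ j ∈ range i, δ j) = ∏ i, N i := by
      rw [← prod_congr rfl fun i _ => h i, prod_mul_distrib, prod_pow, hlam, one_pow, one_mul]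
    intro i
    rw [h i, huniq _ hpos hprod]
  · intro h i
    rw [h i, h 0]
    simp

/-- For H ≥ 2 nonzero vectors w₁,...,w_H and δ₁,...,δ_{H-1} ∈ ℝ,
there are exactly 2^{H-1} tuples (λ₁,...,λ_H) with λ₁⋯λ_H = 1 and
δ_i = ‖λ_{i+1} w_{i+1}‖² − ‖λ_i w_i‖², and all such tuples agree up to signs. -/
theorem stmt_2 (H : ℕ) (hH : 2 ≤ H) (k : Fin H → ℕ)
    (w : ∀ i, EuclideanSpace ℝ (Fin (k i))) (hw : ∀ i, w i ≠ 0)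
    (δ : ℕ → ℝ) (S : Set (Fin H → ℝ))
    (hS : S = {lam | (∏ i, lam i) = 1 ∧
      ∀ i : ℕ, ∀ h : i + 1 < H,
        δ i = ‖lam ⟨i + 1, h⟩ • w ⟨i + 1, h⟩‖ ^ 2
            - ‖lam ⟨i, by omega⟩ • w ⟨i, by omega⟩‖ ^ 2}) :
    S.ncard = 2 ^ (H - 1) ∧
    ∀ lam ∈ S, ∀ lam' ∈ S, ∀ i, lam' i = lam i ∨ lam' i = -lam i := by
  obtain ⟨n, rfl⟩ : ∃ n, H = n + 1 := ⟨H - 1, by omega⟩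
  have hN : ∀ i, 0 < ‖w i‖ ^ 2 := fun i => pow_pos (norm_pos_iff.mpr (hw i)) 2
  obtain ⟨t, ⟨ht, htN⟩, huniq⟩ :=
    existsUnique_pos_prod_add_eq (fun i : Fin (n + 1) => ∑ j ∈ range i, δ j)
      (prod_pos fun i _ => hN i)
  simp only [norm_smul, mul_pow, Real.norm_eq_abs, sq_abs] at hS
  rw [hS.trans (setOf_prod_eq_one_and_sq_mul_sub_eq _ hN δ fun s hs hsN => huniq s ⟨hs, hsN⟩)]
  refine ⟨ncard_setOf_prod_eq_and_sq_eq _ (fun i => div_pos (ht i) (hN i)) 1 ?_, ?_⟩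
  · rw [prod_div_distrib, htN, div_self (prod_pos fun i _ => hN i).ne', one_pow]
  · rintro lam ⟨-, hlam⟩ lam' ⟨-, hlam'⟩ i
    exact sq_eq_sq_iff_eq_or_eq_neg.mp ((hlam' i).trans (hlam i).symm)
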